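/- Let K be a compact Hausdorff space, B the open unit ball of the complex Banach space C(K), and f₀ ∈ B. Then the map T : B → B defined pointwise by T(f) = (f - f₀)/(1 - conj(f₀)·f) is biholomorphic: T maps B into B, is holomorphic (Fréchet differentiable in the complex sense) on B, and is a bijection of B onto B whose inverse S(f) = (f + f₀)/(1 + conj(f₀)·f) is holomorphic; moreover T(f₀) = 0. -/

import Mathlib

open Metric Filter Topology

namespace ClusterValue

variable (X : Type*) [NormedAddCommGroup X] [NormedSpace ℂ X]

/-- Membership in `A_u(B)`: analytic on the open unit ball, bounded there,
and uniformly continuous there. -/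
def MemAu (f : X → ℂ) : Prop :=
  AnalyticOn ℂ f (ball (0 : X) 1) ∧ (∃ C : ℝ, ∀ x ∈ ball (0 : X) 1, ‖f x‖ ≤ C) ∧
    UniformContinuousOn f (ball (0 : X) 1)

/-- Membership in `H^∞(B)`: analytic on the open unit ball and bounded there. -/
def MemHinf (f : X → ℂ) : Prop :=
  AnalyticOn ℂ f (ball (0 : X) 1) ∧ (∃ C : ℝ, ∀ x ∈ ball (0 : X) 1, ‖f x‖ ≤ C)

/-- A character (nonzero continuous multiplicative linear functional) of the algebra
of functions on the open unit ball of `X` determined by the membership predicate `Mem`.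
Functions are identified when they agree on the ball. -/
structure Character (Mem : (X → ℂ) → Prop) : Type _ where
  toFun : (X → ℂ) → ℂ
  congr' : ∀ f g, Mem f → Mem g → (∀ x ∈ ball (0 : X) 1, f x = g x) → toFun f = toFun g
  map_add' : ∀ f g, Mem f → Mem g → toFun (f + g) = toFun f + toFun g
  map_mul' : ∀ f g, Mem f → Mem g → toFun (f * g) = toFun f * toFun g
  map_smul' : ∀ (c : ℂ) (f), Mem f → toFun (c • f) = c * toFun f
  map_one' : toFun 1 = 1
  continuous' : ∃ C : ℝ, ∀ (f : X → ℂ) (M : ℝ), Mem f →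
    (∀ x ∈ ball (0 : X) 1, ‖f x‖ ≤ M) → ‖toFun f‖ ≤ C * M

variable {X}

/-- The fiber over `0`: characters annihilating all continuous linear functionals. -/
def Character.inFiberZero {Mem : (X → ℂ) → Prop} (τ : Character X Mem) : Prop :=
  ∀ φ : X →L[ℂ] ℂ, τ.toFun ⇑φ = 0

/-- The fiber over `x'' ∈ X**`. -/
def Character.inFiber {Mem : (X → ℂ) → Prop} (τ : Character X Mem)
    (x'' : (X →L[ℂ] ℂ) →L[ℂ] ℂ) : Prop :=
  ∀ φ : X →L[ℂ] ℂ, τ.toFun ⇑φ = x'' φ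

variable (X)

/-- The cluster set of `f` at `0`: limits of `f` along weakly null nets (filters) in the ball. -/
def clusterSetZero (f : X → ℂ) : Set ℂ :=
  {z | ∃ l : Filter X, l.NeBot ∧ l ≤ 𝓟 (ball (0 : X) 1) ∧
    (∀ φ : X →L[ℂ] ℂ, Tendsto (fun x => φ x) l (𝓝 0)) ∧ Tendsto f l (𝓝 z)}

/-- The cluster set of `f` at `x'' ∈ X**`: limits of `f` along nets in the ball converging
weak-star to `x''`. -/
def clusterSet (f : X → ℂ) (x'' : (X →L[ℂ] ℂ) →L[ℂ] ℂ) : Set ℂ :=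
  {z | ∃ l : Filter X, l.NeBot ∧ l ≤ 𝓟 (ball (0 : X) 1) ∧
    (∀ φ : X →L[ℂ] ℂ, Tendsto (fun x => φ x) l (𝓝 (x'' φ))) ∧ Tendsto f l (𝓝 z)}

/-- A finite rank (bounded linear) operator. -/
def FiniteRank (S : X →L[ℂ] X) : Prop :=
  FiniteDimensional ℂ ↥(LinearMap.range (S : X →ₗ[ℂ] X))

/-- Finite type polynomials: the subalgebra of functions generated by the
continuous linear functionals (and constants). -/
def IsFiniteTypePoly (p : X → ℂ) : Prop :=
  p ∈ Algebra.adjoin ℂ (Set.range fun φ : X →L[ℂ] ℂ => (⇑φ : X → ℂ))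

/-- Membership in `A(B)`: uniform limits on the ball of finite type polynomials. -/
def MemA (f : X → ℂ) : Prop :=
  ∀ ε > (0 : ℝ), ∃ p : X → ℂ, IsFiniteTypePoly X p ∧ ∀ x ∈ ball (0 : X) 1, ‖f x - p x‖ ≤ ε

/-- A continuous polynomial: a finite sum of (diagonals of) continuous multilinear maps. -/
def IsContPoly (p : X → ℂ) : Prop :=
  ∃ (N : ℕ) (M : ∀ k : ℕ, ContinuousMultilinearMap ℂ (fun _ : Fin k => X) ℂ),
    ∀ x, p x = ∑ k ∈ Finset.range N, M k (fun _ => x)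

end ClusterValue

/-!
On `C(K)` the map is `f ↦ (f - f₀) (1 - f₀⋆ f)⁻¹`, computed in the Banach algebra, so it is
holomorphic wherever the inverse exists, because inversion in a Banach algebra is. Evaluated
at `t ∈ K` it is the disc automorphism `z ↦ (z - a) / (1 - ā z)` with `a = f₀ t`, and the sup
norm on a compact space is attained, so mapping the ball into itself and inverting by `-f₀`
reduce to the scalar facts `|1 - ā z|² - |z - a|² = (1 - |a|²)(1 - |z|²)` and `φ₋ₐ ∘ φₐ = id`.
-/

open ComplexConjugate Ring

namespace Complex

noncomputable def mobius (a z : ℂ) : ℂ := (z - a) / (1 - conj a * z)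

variable {a z : ℂ}

theorem mobius_self (a : ℂ) : mobius a a = 0 := by
  simp [mobius]

theorem mobius_neg : mobius (-a) z = (z + a) / (1 + conj a * z) := by
  simp [mobius, sub_eq_add_neg]

theorem one_sub_conj_mul_ne_zero (ha : ‖a‖ < 1) (hz : ‖z‖ ≤ 1) : 1 - conj a * z ≠ 0 := by
  have hlt : ‖conj a * z‖ < 1 := by
    rw [norm_mul, norm_conj]
    nlinarith [norm_nonneg a, norm_nonneg z]
  intro h
  rw [← sub_eq_zero.1 h, norm_one] at hlt
  exact hlt.false

theorem normSq_one_sub_conj_mul_sub_normSq_sub (a z : ℂ) :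
    normSq (1 - conj a * z) - normSq (z - a) = (1 - normSq a) * (1 - normSq z) := by
  simp only [normSq_apply, sub_re, sub_im, mul_re, mul_im, conj_re, conj_im, one_re, one_im]
  ring

theorem norm_mobius_lt_one (ha : ‖a‖ < 1) (hz : ‖z‖ < 1) : ‖mobius a z‖ < 1 := by
  rw [mobius, norm_div, div_lt_one (norm_pos_iff.2 (one_sub_conj_mul_ne_zero ha hz.le)),
    ← sq_lt_sq₀ (norm_nonneg _) (norm_nonneg _), ← normSq_eq_norm_sq, ← normSq_eq_norm_sq,
    ← sub_pos, normSq_one_sub_conj_mul_sub_normSq_sub, normSq_eq_norm_sq, normSq_eq_norm_sq]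
  exact mul_pos (sub_pos.2 (pow_lt_one₀ (norm_nonneg a) ha two_ne_zero))
    (sub_pos.2 (pow_lt_one₀ (norm_nonneg z) hz two_ne_zero))

theorem mobius_neg_mobius (ha : ‖a‖ < 1) (hz : ‖z‖ ≤ 1) : mobius (-a) (mobius a z) = z := by
  have hz' := one_sub_conj_mul_ne_zero ha hz
  have ha' := one_sub_conj_mul_ne_zero ha ha.le
  have hden : 1 + conj a * ((z - a) / (1 - conj a * z)) =
      (1 - conj a * a) / (1 - conj a * z) := by
    field_simp
    ring
  rw [mobius_neg, mobius, hden, div_add' _ _ _ hz', div_div_div_cancel_right₀ hz',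
    div_eq_iff ha']
  ring

end Complex

section StarRing

variable {A : Type*}

/-- `Ring.inverse` is `0` off the units; on the open unit ball `1 - star a * f` is a unit. -/
noncomputable def mobiusMap [Ring A] [StarRing A] (a f : A) : A :=
  (f - a) * (1 - star a * f)⁻¹ʳ

theorem mobiusMap_self [Ring A] [StarRing A] (a : A) : mobiusMap a a = 0 := by
  simp [mobiusMap]

theorem isUnit_one_sub_star_mul [NormedRing A] [StarRing A] [NormedStarGroup A]
    [HasSummableGeomSeries A] {a f : A} (ha : ‖a‖ < 1) (hf : ‖f‖ ≤ 1) :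
    IsUnit (1 - star a * f) := by
  refine isUnit_one_sub_of_norm_lt_one ((norm_mul_le _ _).trans_lt ?_)
  rw [norm_star]
  nlinarith [norm_nonneg a, norm_nonneg f]

theorem differentiableAt_mobiusMap {𝕜 : Type*} [NontriviallyNormedField 𝕜] [NormedRing A]
    [NormedAlgebra 𝕜 A] [StarRing A] [HasSummableGeomSeries A] {a f : A}
    (hf : IsUnit (1 - star a * f)) : DifferentiableAt 𝕜 (mobiusMap a) f :=
  (differentiableAt_id.sub_const a).mul
    (((differentiableAt_const 1).sub ((differentiableAt_const _).mul differentiableAt_id)).inverse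
      hf)

end StarRing

namespace ContinuousMap

variable {X : Type*} [TopologicalSpace X]

theorem ringInverse_apply {R : Type*} [DivisionRing R] [TopologicalSpace R] [IsTopologicalRing R]
    {d : C(X, R)} (hd : IsUnit d) (x : X) : d⁻¹ʳ x = (d x)⁻¹ :=
  eq_inv_of_mul_eq_one_right <| by rw [← mul_apply, Ring.mul_inverse_cancel d hd, one_apply]

theorem mobiusMap_apply {a f : C(X, ℂ)} (hf : IsUnit (1 - star a * f)) (x : X) :
    mobiusMap a f x = Complex.mobius (a x) (f x) := by
  rw [mobiusMap, mul_apply, ringInverse_apply hf, Complex.mobius, div_eq_mul_inv]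
  rfl

variable [CompactSpace X] {a f : C(X, ℂ)}

theorem mobiusMap_apply_of_norm_lt_one (ha : ‖a‖ < 1) (hf : ‖f‖ < 1) (x : X) :
    mobiusMap a f x = Complex.mobius (a x) (f x) :=
  mobiusMap_apply (isUnit_one_sub_star_mul ha hf.le) x

theorem norm_mobiusMap_lt_one (ha : ‖a‖ < 1) (hf : ‖f‖ < 1) : ‖mobiusMap a f‖ < 1 := by
  refine (norm_lt_iff _ one_pos).2 fun x => ?_
  rw [mobiusMap_apply_of_norm_lt_one ha hf]
  exact Complex.norm_mobius_lt_one ((norm_coe_le_norm a x).trans_lt ha)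
    ((norm_coe_le_norm f x).trans_lt hf)

theorem mobiusMap_neg_mobiusMap (ha : ‖a‖ < 1) (hf : ‖f‖ < 1) :
    mobiusMap (-a) (mobiusMap a f) = f := by
  ext x
  rw [mobiusMap_apply_of_norm_lt_one (by rwa [norm_neg]) (norm_mobiusMap_lt_one ha hf),
    mobiusMap_apply_of_norm_lt_one ha hf]
  exact Complex.mobius_neg_mobius ((norm_coe_le_norm a x).trans_lt ha)
    ((norm_coe_le_norm f x).trans hf.le)

theorem mapsTo_mobiusMap (ha : ‖a‖ < 1) :
    Set.MapsTo (mobiusMap a) (ball (0 : C(X, ℂ)) 1) (ball 0 1) := fun _ hg =>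
  mem_ball_zero_iff.2 (norm_mobiusMap_lt_one ha (mem_ball_zero_iff.1 hg))

theorem leftInvOn_mobiusMap_neg (ha : ‖a‖ < 1) :
    Set.LeftInvOn (mobiusMap (-a)) (mobiusMap a) (ball (0 : C(X, ℂ)) 1) := fun _ hg =>
  mobiusMap_neg_mobiusMap ha (mem_ball_zero_iff.1 hg)

theorem invOn_mobiusMap_neg (ha : ‖a‖ < 1) :
    Set.InvOn (mobiusMap (-a)) (mobiusMap a) (ball (0 : C(X, ℂ)) 1) (ball 0 1) := by
  refine ⟨leftInvOn_mobiusMap_neg ha, ?_⟩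
  simpa using leftInvOn_mobiusMap_neg (a := -a) (by rwa [norm_neg])

end ContinuousMap

open Metric Filter Topology in
theorem statement14_general (K : Type*) [TopologicalSpace K] [CompactSpace K]
    (f₀ : C(K, ℂ)) (hf₀ : f₀ ∈ ball (0 : C(K, ℂ)) 1) :
    ∃ T S : C(K, ℂ) → C(K, ℂ),
      (∀ f ∈ ball (0 : C(K, ℂ)) 1, ∀ t : K,
        T f t = (f t - f₀ t) / (1 - (starRingEnd ℂ) (f₀ t) * f t)) ∧
      (∀ f ∈ ball (0 : C(K, ℂ)) 1, ∀ t : K,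
        S f t = (f t + f₀ t) / (1 + (starRingEnd ℂ) (f₀ t) * f t)) ∧
      -- `T` maps `B` into `B`
      Set.MapsTo T (ball (0 : C(K, ℂ)) 1) (ball (0 : C(K, ℂ)) 1) ∧
      -- `T` is holomorphic on `B` (Fréchet differentiable in the complex sense)
      (∀ f ∈ ball (0 : C(K, ℂ)) 1, DifferentiableAt ℂ T f) ∧
      -- `T` is a bijection of `B` onto `B`
      Set.BijOn T (ball (0 : C(K, ℂ)) 1) (ball (0 : C(K, ℂ)) 1) ∧
      -- the inverse `S` maps `B` into `B` and is holomorphic on `B`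
      Set.MapsTo S (ball (0 : C(K, ℂ)) 1) (ball (0 : C(K, ℂ)) 1) ∧
      (∀ f ∈ ball (0 : C(K, ℂ)) 1, DifferentiableAt ℂ S f) ∧
      -- `S` is inverse to `T`
      (∀ f ∈ ball (0 : C(K, ℂ)) 1, S (T f) = f) ∧
      (∀ f ∈ ball (0 : C(K, ℂ)) 1, T (S f) = f) ∧
      -- `T` sends `f₀` to `0`
      T f₀ = 0 := by
  rw [mem_ball_zero_iff] at hf₀
  have hf₀' : ‖-f₀‖ < 1 := by rwa [norm_neg]
  have hT := ContinuousMap.mapsTo_mobiusMap hf₀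
  have hS := ContinuousMap.mapsTo_mobiusMap hf₀'
  have hinv := ContinuousMap.invOn_mobiusMap_neg hf₀
  have hdiff {a : C(K, ℂ)} (ha : ‖a‖ < 1) :
      ∀ f ∈ ball (0 : C(K, ℂ)) 1, DifferentiableAt ℂ (mobiusMap a) f := fun f hf =>
    differentiableAt_mobiusMap (isUnit_one_sub_star_mul ha (mem_ball_zero_iff.1 hf).le)
  refine ⟨mobiusMap f₀, mobiusMap (-f₀), fun f hf t => ?_, fun f hf t => ?_, hT, hdiff hf₀,
    hinv.bijOn hT hS, hS, hdiff hf₀', hinv.1, hinv.2, mobiusMap_self f₀⟩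
  · exact ContinuousMap.mobiusMap_apply_of_norm_lt_one hf₀ (mem_ball_zero_iff.1 hf) t
  · rw [ContinuousMap.mobiusMap_apply_of_norm_lt_one hf₀' (mem_ball_zero_iff.1 hf) t,
      ContinuousMap.neg_apply, Complex.mobius_neg]

open Metric Filter Topology in
/-- For `f₀` in the open unit ball `B` of `C(K)`, the Möbius map
`T f = (f - f₀) / (1 - conj f₀ · f)` (pointwise) is a biholomorphism of `B` onto `B` with
holomorphic inverse `S f = (f + f₀) / (1 + conj f₀ · f)`, and `T f₀ = 0`. -/
theorem statement14 (K : Type*) [TopologicalSpace K] [CompactSpace K] [T2Space K]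
    (f₀ : C(K, ℂ)) (hf₀ : f₀ ∈ ball (0 : C(K, ℂ)) 1) :
    ∃ T S : C(K, ℂ) → C(K, ℂ),
      (∀ f ∈ ball (0 : C(K, ℂ)) 1, ∀ t : K,
        T f t = (f t - f₀ t) / (1 - (starRingEnd ℂ) (f₀ t) * f t)) ∧
      (∀ f ∈ ball (0 : C(K, ℂ)) 1, ∀ t : K,
        S f t = (f t + f₀ t) / (1 + (starRingEnd ℂ) (f₀ t) * f t)) ∧
      -- `T` maps `B` into `B`
      Set.MapsTo T (ball (0 : C(K, ℂ)) 1) (ball (0 : C(K, ℂ)) 1) ∧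
      -- `T` is holomorphic on `B` (Fréchet differentiable in the complex sense)
      (∀ f ∈ ball (0 : C(K, ℂ)) 1, DifferentiableAt ℂ T f) ∧
      -- `T` is a bijection of `B` onto `B`
      Set.BijOn T (ball (0 : C(K, ℂ)) 1) (ball (0 : C(K, ℂ)) 1) ∧
      -- the inverse `S` maps `B` into `B` and is holomorphic on `B`
      Set.MapsTo S (ball (0 : C(K, ℂ)) 1) (ball (0 : C(K, ℂ)) 1) ∧
      (∀ f ∈ ball (0 : C(K, ℂ)) 1, DifferentiableAt ℂ S f) ∧
      -- `S` is inverse to `T`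
      (∀ f ∈ ball (0 : C(K, ℂ)) 1, S (T f) = f) ∧
      (∀ f ∈ ball (0 : C(K, ℂ)) 1, T (S f) = f) ∧
      -- `T` sends `f₀` to `0`
      T f₀ = 0 :=
  statement14_general K f₀ hf₀
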